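/- arXiv:2402.10773 — 10 statements merged into one kernel-verified Lean document; each statement's English description precedes it below -/
import Mathlib

section
/- If input in₁ is locally dominated by a subset S of remaining inputs, then in₁ is also locally dominated by the subset of S consisting of inputs overlapping with in₁. -/
/-- Input `i` is locally dominated by subset `S`. -/
def LocDom {Inp Obj : Type*} [DecidableEq Obj]
    (Cov : Inp → Finset Obj) (cost : Inp → ℝ) (i : Inp) (S : Finset Inp) : Prop :=
  i ∉ S ∧ Cov i ⊆ S.biUnion Cov ∧ ∑ x ∈ S, cost x ≤ cost i

/-- Local dominance is local. -/
theorem localDominance_is_local {Inp Obj : Type*} [DecidableEq Inp] [DecidableEq Obj]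
    (T : Finset Inp) (Cov : Inp → Finset Obj) (cost : Inp → ℝ)
    (hCov : ∀ i ∈ T, (Cov i).Nonempty) (hcost : ∀ i ∈ T, 0 < cost i)
    (in₁ : Inp) (S : Finset Inp) (hin₁ : in₁ ∈ T) (hS : S ⊆ T)
    (h : LocDom Cov cost in₁ S) :
    LocDom Cov cost in₁ (S.filter fun in₂ => (Cov in₁ ∩ Cov in₂).Nonempty) := by
  obtain ⟨hmem, hcov, hsum⟩ := h
  refine ⟨fun hx => hmem (Finset.mem_filter.mp hx).1, ?_, ?_⟩
  · intro o ho
    obtain ⟨x, hxS, hox⟩ := Finset.mem_biUnion.mp (hcov ho)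
    exact Finset.mem_biUnion.mpr ⟨x, Finset.mem_filter.mpr ⟨hxS, ⟨o, Finset.mem_inter.mpr ⟨ho, hox⟩⟩⟩, hox⟩
  · refine le_trans (Finset.sum_le_sum_of_subset_of_nonneg (Finset.filter_subset _ _) ?_) hsum
    exact fun x hx _ => (hcost x (hS hx)).le
end

section
/- Local dominance for subsets is asymmetric across witnesses: if in₁ ⊑ S₁, in₂ ∈ S₁, and in₂ ⊑ S₂, then in₁ ∉ S₂. -/
/-- Local dominance for subsets is asymmetric. -/
theorem locDom_subsets_asymm {Inp Obj : Type*} [DecidableEq Inp] [DecidableEq Obj]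
    (T : Finset Inp) (Cov : Inp → Finset Obj) (cost : Inp → ℝ)
    (hCov : ∀ i ∈ T, (Cov i).Nonempty) (hcost : ∀ i ∈ T, 0 < cost i)
    (hNoDup : ∀ i₁ ∈ T, ∀ i₂ ∈ T, Cov i₁ = Cov i₂ → cost i₁ = cost i₂ → i₁ = i₂)
    (in₁ in₂ : Inp) (S₁ S₂ : Finset Inp)
    (h₁ : in₁ ∈ T) (h₂ : in₂ ∈ T) (hS₁ : S₁ ⊆ T) (hS₂ : S₂ ⊆ T)
    (hd₁ : LocDom Cov cost in₁ S₁) (hmem : in₂ ∈ S₁)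
    (hd₂ : LocDom Cov cost in₂ S₂) : in₁ ∉ S₂ := by
  intro hmem₂
  obtain ⟨hn₁, hc₁, hs₁⟩ := hd₁
  obtain ⟨hn₂, hc₂, hs₂⟩ := hd₂
  -- single element lower bounds
  have l₁ : cost in₂ ≤ ∑ x ∈ S₁, cost x :=
    Finset.single_le_sum (fun x hx => (hcost x (hS₁ hx)).le) hmem
  have l₂ : cost in₁ ≤ ∑ x ∈ S₂, cost x :=
    Finset.single_le_sum (fun x hx => (hcost x (hS₂ hx)).le) hmem₂
  have e₁ : ∑ x ∈ S₁, cost x = cost in₁ := le_antisymm hs₁ (l₂.trans hs₂ |>.trans l₁)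
  have e₂ : ∑ x ∈ S₂, cost x = cost in₂ := le_antisymm hs₂ (l₁.trans hs₁ |>.trans l₂)
  have ecost : cost in₁ = cost in₂ := le_antisymm (l₂.trans hs₂) (l₁.trans hs₁)
  -- S₂ = {in₁}
  have hS₂eq : S₂ = {in₁} := by
    have herase : ∑ x ∈ S₂.erase in₁, cost x = 0 := by
      have := Finset.sum_erase_add S₂ cost hmem₂
      linarith [e₂, ecost]
    have hempty : S₂.erase in₁ = ∅ := by
      by_contra h
      obtain ⟨y, hy⟩ := Finset.nonempty_of_ne_empty h
      have hpos : 0 < ∑ x ∈ S₂.erase in₁, cost x :=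
        Finset.sum_pos (fun x hx => hcost x (hS₂ (Finset.mem_of_mem_erase hx))) ⟨y, hy⟩
      linarith
    have := Finset.insert_erase hmem₂
    rw [hempty] at this
    simp at this
    exact this.symm
  have hS₁eq : S₁ = {in₂} := by
    have herase : ∑ x ∈ S₁.erase in₂, cost x = 0 := by
      have := Finset.sum_erase_add S₁ cost hmem
      linarith [e₁, ecost]
    have hempty : S₁.erase in₂ = ∅ := by
      by_contra h
      obtain ⟨y, hy⟩ := Finset.nonempty_of_ne_empty h
      have hpos : 0 < ∑ x ∈ S₁.erase in₂, cost x :=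
        Finset.sum_pos (fun x hx => hcost x (hS₁ (Finset.mem_of_mem_erase hx))) ⟨y, hy⟩
      linarith
    have := Finset.insert_erase hmem
    rw [hempty] at this
    simp at this
    exact this.symm
  rw [hS₁eq] at hc₁; rw [hS₂eq] at hc₂
  simp [Finset.biUnion_singleton] at hc₁ hc₂
  have : in₁ = in₂ := hNoDup in₁ h₁ in₂ h₂ (le_antisymm hc₁ hc₂) ecost
  exact hn₂ (this ▸ hmem₂)
end

section
/- The local dominance relation on inputs (in₁ ↪ in₂ iff there exists S ⊆ T with in₁ ∈ S and in₂ ⊑ S) is asymmetric: if in₂ ↪ in₁ then ¬(in₁ ↪ in₂). -/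
/-- `i₁` locally dominates `i₂`. -/
def HookDom {Inp Obj : Type*} [DecidableEq Obj] (T : Finset Inp)
    (Cov : Inp → Finset Obj) (cost : Inp → ℝ) (i₁ i₂ : Inp) : Prop :=
  ∃ S : Finset Inp, S ⊆ T ∧ i₁ ∈ S ∧ LocDom Cov cost i₂ S

lemma mem_le_sum_cost {Inp : Type*} [DecidableEq Inp] {T S : Finset Inp} {cost : Inp → ℝ}
    (hcost : ∀ i ∈ T, 0 < cost i) (hST : S ⊆ T) {i : Inp} (hi : i ∈ S) :
    cost i ≤ ∑ x ∈ S, cost x := by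
  have := Finset.add_sum_erase S cost hi
  have h0 : 0 ≤ ∑ x ∈ S.erase i, cost x :=
    Finset.sum_nonneg fun x hx => (hcost x (hST (Finset.mem_of_mem_erase hx))).le
  linarith

lemma singleton_of_sum_le {Inp : Type*} [DecidableEq Inp] {T S : Finset Inp} {cost : Inp → ℝ}
    (hcost : ∀ i ∈ T, 0 < cost i) (hST : S ⊆ T) {i : Inp} (hi : i ∈ S)
    (hle : ∑ x ∈ S, cost x ≤ cost i) : S = {i} := by
  have hadd := Finset.add_sum_erase S cost hi
  have hz : ¬ (S.erase i).Nonempty := by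
    intro hne
    have hpos : 0 < ∑ x ∈ S.erase i, cost x :=
      Finset.sum_pos (fun x hx => hcost x (hST (Finset.mem_of_mem_erase hx))) hne
    linarith
  have : S.erase i = ∅ := Finset.not_nonempty_iff_eq_empty.mp hz
  rcases (Finset.erase_eq_empty_iff S i).mp this with h | h
  · exact absurd (h ▸ hi) (Finset.notMem_empty i)
  · exact h

/-- Local dominance for inputs is asymmetric. -/
theorem hookDom_asymm {Inp Obj : Type*} [DecidableEq Inp] [DecidableEq Obj]
    (T : Finset Inp) (Cov : Inp → Finset Obj) (cost : Inp → ℝ)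
    (hCov : ∀ i ∈ T, (Cov i).Nonempty) (hcost : ∀ i ∈ T, 0 < cost i)
    (hNoDup : ∀ i₁ ∈ T, ∀ i₂ ∈ T, Cov i₁ = Cov i₂ → cost i₁ = cost i₂ → i₁ = i₂)
    (in₁ in₂ : Inp) (h₁ : in₁ ∈ T) (h₂ : in₂ ∈ T)
    (h : HookDom T Cov cost in₂ in₁) : ¬ HookDom T Cov cost in₁ in₂ := by
  rintro ⟨S₂, hS₂T, h1S₂, h2nS₂, hCov₂, hsum₂⟩
  obtain ⟨S₁, hS₁T, h2S₁, h1nS₁, hCov₁, hsum₁⟩ := h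
  have hle₁ : cost in₂ ≤ cost in₁ := le_trans (mem_le_sum_cost hcost hS₁T h2S₁) hsum₁
  have hle₂ : cost in₁ ≤ cost in₂ := le_trans (mem_le_sum_cost hcost hS₂T h1S₂) hsum₂
  have hceq : cost in₁ = cost in₂ := le_antisymm hle₂ hle₁
  have hS₁ : S₁ = {in₂} := singleton_of_sum_le hcost hS₁T h2S₁ (hsum₁.trans hle₂)
  have hS₂ : S₂ = {in₁} := singleton_of_sum_le hcost hS₂T h1S₂ (hsum₂.trans hle₁)
  rw [hS₁, Finset.singleton_biUnion] at hCov₁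
  rw [hS₂, Finset.singleton_biUnion] at hCov₂
  have hcov : Cov in₁ = Cov in₂ := le_antisymm hCov₁ hCov₂
  have : in₁ = in₂ := hNoDup in₁ h₁ in₂ h₂ hcov hceq
  rw [hS₁, this] at h1nS₁
  exact h1nS₁ (Finset.mem_singleton_self in₂)
end

section
/- Local dominance for subsets is transitive in the following sense: if in₁ ⊑ S₁, in₂ ∈ S₁, and in₂ ⊑ S₂, then in₁ ⊑ (S₁ \ {in₂}) ∪ S₂. -/
/-- Local dominance for subsets is transitive. -/
theorem locDom_subsets_trans {Inp Obj : Type*} [DecidableEq Inp] [DecidableEq Obj]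
    (T : Finset Inp) (Cov : Inp → Finset Obj) (cost : Inp → ℝ)
    (hCov : ∀ i ∈ T, (Cov i).Nonempty) (hcost : ∀ i ∈ T, 0 < cost i)
    (hNoDup : ∀ i₁ ∈ T, ∀ i₂ ∈ T, Cov i₁ = Cov i₂ → cost i₁ = cost i₂ → i₁ = i₂)
    (in₁ in₂ : Inp) (S₁ S₂ : Finset Inp)
    (h₁ : in₁ ∈ T) (h₂ : in₂ ∈ T) (hS₁ : S₁ ⊆ T) (hS₂ : S₂ ⊆ T)
    (hd₁ : LocDom Cov cost in₁ S₁) (hmem : in₂ ∈ S₁)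
    (hd₂ : LocDom Cov cost in₂ S₂) :
    LocDom Cov cost in₁ ((S₁.erase in₂) ∪ S₂) := by
  obtain ⟨hn₁, hcov₁, hc₁⟩ := hd₁
  obtain ⟨hn₂, hcov₂, hc₂⟩ := hd₂
  have hsplit : cost in₂ + ∑ x ∈ S₁.erase in₂, cost x = ∑ x ∈ S₁, cost x :=
    Finset.add_sum_erase _ _ hmem
  have hne : in₁ ∉ S₂ := by
    intro hmem₂
    have h12 : cost in₂ ≤ ∑ x ∈ S₁, cost x :=
      Finset.single_le_sum (fun x hx => (hcost x (hS₁ hx)).le) hmem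
    have h21 : cost in₁ ≤ ∑ x ∈ S₂, cost x :=
      Finset.single_le_sum (fun x hx => (hcost x (hS₂ hx)).le) hmem₂
    have heq : cost in₁ = cost in₂ := le_antisymm (h21.trans hc₂) (h12.trans hc₁)
    have hS1 : S₁ = {in₂} := by
      by_contra h
      have hne' : (S₁.erase in₂).Nonempty := by
        rcases Finset.eq_empty_or_nonempty (S₁.erase in₂) with he | hn
        · exact absurd (by
            apply Finset.eq_singleton_iff_unique_mem.mpr
            refine ⟨hmem, fun y hy => ?_⟩
            by_contra hy'
            exact (Finset.notMem_empty y) (he ▸ Finset.mem_erase.mpr ⟨hy', hy⟩)) h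
        · exact hn
      have hpos : 0 < ∑ x ∈ S₁.erase in₂, cost x :=
        Finset.sum_pos (fun x hx => hcost x (hS₁ (Finset.mem_of_mem_erase hx))) hne'
      linarith
    have hS2 : S₂ = {in₁} := by
      by_contra h
      have hne' : (S₂.erase in₁).Nonempty := by
        rcases Finset.eq_empty_or_nonempty (S₂.erase in₁) with he | hn
        · exact absurd (by
            apply Finset.eq_singleton_iff_unique_mem.mpr
            refine ⟨hmem₂, fun y hy => ?_⟩
            by_contra hy'
            exact (Finset.notMem_empty y) (he ▸ Finset.mem_erase.mpr ⟨hy', hy⟩)) h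
        · exact hn
      have hpos : 0 < ∑ x ∈ S₂.erase in₁, cost x :=
        Finset.sum_pos (fun x hx => hcost x (hS₂ (Finset.mem_of_mem_erase hx))) hne'
      have hsplit₂ : cost in₁ + ∑ x ∈ S₂.erase in₁, cost x = ∑ x ∈ S₂, cost x :=
        Finset.add_sum_erase _ _ hmem₂
      linarith
    have hcoveq : Cov in₁ = Cov in₂ := by
      apply Finset.Subset.antisymm
      · have : S₁.biUnion Cov = Cov in₂ := by rw [hS1]; simp
        exact this ▸ hcov₁
      · have : S₂.biUnion Cov = Cov in₁ := by rw [hS2]; simp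
        exact this ▸ hcov₂
    exact hn₁ (hNoDup in₁ h₁ in₂ h₂ hcoveq heq ▸ hmem)
  refine ⟨?_, ?_, ?_⟩
  · simp only [Finset.mem_union, Finset.mem_erase, not_or]
    exact ⟨fun h => hn₁ h.2, hne⟩
  · intro o ho
    have := hcov₁ ho
    rw [Finset.mem_biUnion] at this ⊢
    obtain ⟨x, hx, hox⟩ := this
    by_cases hx2 : x = in₂
    · subst hx2
      obtain ⟨y, hy, hoy⟩ := Finset.mem_biUnion.mp (hcov₂ hox)
      exact ⟨y, Finset.mem_union_right _ hy, hoy⟩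
    · exact ⟨x, Finset.mem_union_left _ (Finset.mem_erase.mpr ⟨hx2, hx⟩), hox⟩
  · have hui : ∑ x ∈ (S₁.erase in₂) ∪ S₂, cost x + ∑ x ∈ (S₁.erase in₂) ∩ S₂, cost x
        = ∑ x ∈ S₁.erase in₂, cost x + ∑ x ∈ S₂, cost x :=
      Finset.sum_union_inter
    have hinter : 0 ≤ ∑ x ∈ (S₁.erase in₂) ∩ S₂, cost x :=
      Finset.sum_nonneg fun x hx =>
        (hcost x (hS₂ (Finset.mem_of_mem_inter_right hx))).le
    linarith
end

section
/- The local dominance relation on inputs ↪ is transitive: if in₃ ↪ in₂ and in₂ ↪ in₁, then in₃ ↪ in₁. -/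
/-- Local dominance for inputs is transitive. -/
theorem hookDom_trans {Inp Obj : Type*} [DecidableEq Inp] [DecidableEq Obj]
    (T : Finset Inp) (Cov : Inp → Finset Obj) (cost : Inp → ℝ)
    (hCov : ∀ i ∈ T, (Cov i).Nonempty) (hcost : ∀ i ∈ T, 0 < cost i)
    (hNoDup : ∀ i₁ ∈ T, ∀ i₂ ∈ T, Cov i₁ = Cov i₂ → cost i₁ = cost i₂ → i₁ = i₂)
    (in₁ in₂ in₃ : Inp) (h₁ : in₁ ∈ T) (h₂ : in₂ ∈ T) (h₃ : in₃ ∈ T)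
    (h32 : HookDom T Cov cost in₃ in₂) (h21 : HookDom T Cov cost in₂ in₁) :
    HookDom T Cov cost in₃ in₁ := by
  obtain ⟨S₂, hS₂T, h3S₂, h2nS₂, h2cov, h2cost⟩ := h32
  obtain ⟨S₁, hS₁T, h2S₁, h1nS₁, h1cov, h1cost⟩ := h21
  -- sums over S₁ with in₂ removed
  have hsum1 : cost in₂ + ∑ x ∈ S₁.erase in₂, cost x = ∑ x ∈ S₁, cost x :=
    Finset.add_sum_erase _ _ h2S₁
  have hA : (0:ℝ) ≤ ∑ x ∈ S₁.erase in₂, cost x :=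
    Finset.sum_nonneg fun x hx => (hcost x (hS₁T (Finset.mem_of_mem_erase hx))).le
  -- in₁ ∉ S₂
  have h1nS₂ : in₁ ∉ S₂ := by
    intro h1S₂
    have hsum2 : cost in₁ + ∑ x ∈ S₂.erase in₁, cost x = ∑ x ∈ S₂, cost x :=
      Finset.add_sum_erase _ _ h1S₂
    have hB : (0:ℝ) ≤ ∑ x ∈ S₂.erase in₁, cost x :=
      Finset.sum_nonneg fun x hx => (hcost x (hS₂T (Finset.mem_of_mem_erase hx))).le
    have hA0 : ∑ x ∈ S₁.erase in₂, cost x = 0 := by linarith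
    have hB0 : ∑ x ∈ S₂.erase in₁, cost x = 0 := by linarith
    have hS₁eq : S₁ = {in₂} := by
      have he : S₁.erase in₂ = ∅ := by
        by_contra h
        obtain ⟨x, hx⟩ := Finset.nonempty_iff_ne_empty.mpr h
        have := Finset.single_le_sum
          (fun y hy => (hcost y (hS₁T (Finset.mem_of_mem_erase hy))).le) hx
        have := hcost x (hS₁T (Finset.mem_of_mem_erase hx))
        linarith [hA0 ▸ this]
      ext y
      simp only [Finset.mem_singleton]
      constructor
      · intro hy
        by_contra hne
        exact absurd (Finset.mem_erase.mpr ⟨hne, hy⟩) (by simp [he])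
      · rintro rfl; exact h2S₁
    have hS₂eq : S₂ = {in₁} := by
      have he : S₂.erase in₁ = ∅ := by
        by_contra h
        obtain ⟨x, hx⟩ := Finset.nonempty_iff_ne_empty.mpr h
        have := Finset.single_le_sum
          (fun y hy => (hcost y (hS₂T (Finset.mem_of_mem_erase hy))).le) hx
        have := hcost x (hS₂T (Finset.mem_of_mem_erase hx))
        linarith [hB0 ▸ this]
      ext y
      simp only [Finset.mem_singleton]
      constructor
      · intro hy
        by_contra hne
        exact absurd (Finset.mem_erase.mpr ⟨hne, hy⟩) (by simp [he])
      · rintro rfl; exact h1S₂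
    have hcov12 : Cov in₁ = Cov in₂ := by
      apply Finset.Subset.antisymm
      · have := h1cov; rw [hS₁eq] at this; simpa using this
      · have := h2cov; rw [hS₂eq] at this; simpa using this
    have hcosteq : cost in₁ = cost in₂ := by
      rw [hS₁eq] at h1cost; rw [hS₂eq] at h2cost
      simp at h1cost h2cost; linarith
    have : in₁ = in₂ := hNoDup in₁ h₁ in₂ h₂ hcov12 hcosteq
    exact h2nS₂ (this ▸ h1S₂)
  refine ⟨S₁.erase in₂ ∪ S₂, ?_, Finset.mem_union_right _ h3S₂, ?_, ?_, ?_⟩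
  · intro x hx
    rcases Finset.mem_union.mp hx with h | h
    · exact hS₁T (Finset.mem_of_mem_erase h)
    · exact hS₂T h
  · intro h
    rcases Finset.mem_union.mp h with h | h
    · exact h1nS₁ (Finset.mem_of_mem_erase h)
    · exact h1nS₂ h
  · intro o ho
    have := h1cov ho
    obtain ⟨x, hxS₁, hox⟩ := Finset.mem_biUnion.mp this
    by_cases hx2 : x = in₂
    · subst hx2
      obtain ⟨y, hyS₂, hoy⟩ := Finset.mem_biUnion.mp (h2cov hox)
      exact Finset.mem_biUnion.mpr ⟨y, Finset.mem_union_right _ hyS₂, hoy⟩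
    · exact Finset.mem_biUnion.mpr
        ⟨x, Finset.mem_union_left _ (Finset.mem_erase.mpr ⟨hx2, hxS₁⟩), hox⟩
  · have hinter : ∑ x ∈ (S₁.erase in₂ ∪ S₂), cost x + ∑ x ∈ (S₁.erase in₂ ∩ S₂), cost x
        = ∑ x ∈ S₁.erase in₂, cost x + ∑ x ∈ S₂, cost x :=
      Finset.sum_union_inter
    have hIn : (0:ℝ) ≤ ∑ x ∈ (S₁.erase in₂ ∩ S₂), cost x :=
      Finset.sum_nonneg fun x hx =>
        (hcost x (hS₂T (Finset.mem_of_mem_inter_right hx))).le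
    linarith
end

section
/- Every locally dominated input is locally dominated by some subset consisting entirely of non-locally-dominated inputs: for every in ∈ T such that in ⊑ S₀ for some S₀, there exists S ⊆ T with in ⊑ S and no element of S is locally dominated by any subset of T. -/
open Finset

theorem Finset.sum_biUnion_le_sum_sum {ι α M : Type*} [DecidableEq α]
    [AddCommMonoid M] [Preorder M] [AddLeftMono M]
    {s : Finset ι} {t : ι → Finset α} {f : α → M} (hf : ∀ a ∈ s.biUnion t, 0 ≤ f a) :
    ∑ a ∈ s.biUnion t, f a ≤ ∑ i ∈ s, ∑ a ∈ t i, f a := by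
  have hsigma : s.biUnion t = (s.sigma t).image Sigma.snd := by ext; simp
  rw [hsigma] at hf ⊢
  exact (sum_image_le_of_nonneg hf).trans_eq (sum_sigma s t fun p => f p.2)

section

variable {Inp Obj : Type*}

def domRank (Cov : Inp → Finset Obj) (cost : Inp → ℝ) (x : Inp) : ℝ ×ₗ (Finset Obj)ᵒᵈ :=
  toLex (cost x, OrderDual.toDual (Cov x))

theorem wellFoundedOn_domRank (T : Finset Inp) (Cov : Inp → Finset Obj) (cost : Inp → ℝ) :
    (T : Set Inp).WellFoundedOn fun y x => domRank Cov cost y < domRank Cov cost x :=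
  Set.wellFoundedOn_image.mp (T.finite_toSet.image _).wellFoundedOn

variable [DecidableEq Obj]

def LocDominated (T : Finset Inp) (Cov : Inp → Finset Obj) (cost : Inp → ℝ) (x : Inp) : Prop :=
  ∃ S ⊆ T, LocDom Cov cost x S

def LocDomByUndominated (T : Finset Inp) (Cov : Inp → Finset Obj) (cost : Inp → ℝ) (x : Inp) :
    Prop :=
  ∃ S ⊆ T, LocDom Cov cost x S ∧ ∀ w ∈ S, ¬ LocDominated T Cov cost w

variable {Cov : Inp → Finset Obj} {cost : Inp → ℝ}

theorem LocDom.domRank_lt {x y : Inp} {S : Finset Inp} (hx : LocDom Cov cost x S) (hy : y ∈ S)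
    (hpos : ∀ z ∈ S, 0 < cost z) (hNoDup : Cov x = Cov y → cost x = cost y → x = y) :
    domRank Cov cost y < domRank Cov cost x := by
  obtain ⟨hxS, hxcov, hxcost⟩ := hx
  rw [domRank, domRank, Prod.Lex.toLex_lt_toLex]
  by_cases hother : ∃ z ∈ S, z ≠ y
  · obtain ⟨z, hz, hzy⟩ := hother
    left
    calc cost y < ∑ w ∈ S, cost w :=
          single_lt_sum hzy hy hz (hpos z hz) fun w hw _ => (hpos w hw).le
      _ ≤ cost x := hxcost
  · push Not at hother
    obtain rfl : S = {y} := eq_singleton_iff_unique_mem.mpr ⟨hy, hother⟩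
    have hcov : Cov x ⊆ Cov y := by simpa using hxcov
    have hcost : cost y ≤ cost x := by simpa using hxcost
    refine hcost.lt_or_eq.imp id fun heq => ⟨heq, hcov.ssubset_of_ne fun hcov_eq => ?_⟩
    exact hxS (mem_singleton.mpr (hNoDup hcov_eq heq.symm))

variable [DecidableEq Inp] {T : Finset Inp}

theorem LocDom.biUnion {x : Inp} {S : Finset Inp} {F : Inp → Finset Inp}
    (hx : LocDom Cov cost x S) (hxF : x ∉ S.biUnion F)
    (hcov : ∀ z ∈ S, Cov z ⊆ (F z).biUnion Cov) (hcost : ∀ z ∈ S, ∑ w ∈ F z, cost w ≤ cost z)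
    (hnonneg : ∀ w ∈ S.biUnion F, 0 ≤ cost w) :
    LocDom Cov cost x (S.biUnion F) := by
  obtain ⟨-, hxcov, hxcost⟩ := hx
  refine ⟨hxF, ?_, ?_⟩
  · rw [biUnion_biUnion]
    exact hxcov.trans (biUnion_mono hcov)
  · calc ∑ w ∈ S.biUnion F, cost w ≤ ∑ z ∈ S, ∑ w ∈ F z, cost w := sum_biUnion_le_sum_sum hnonneg
      _ ≤ ∑ z ∈ S, cost z := sum_le_sum hcost
      _ ≤ cost x := hxcost

theorem LocDom.locDomByUndominated {x : Inp} {S₀ : Finset Inp} (hS₀ : S₀ ⊆ T)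
    (hx : LocDom Cov cost x S₀) (hnonneg : ∀ w ∈ T, 0 ≤ cost w)
    (hrefine : ∀ z ∈ S₀, LocDominated T Cov cost z → LocDomByUndominated T Cov cost z) :
    LocDomByUndominated T Cov cost x := by
  have hF : ∀ z ∈ S₀, ∃ F ⊆ T, (Cov z ⊆ F.biUnion Cov ∧ ∑ w ∈ F, cost w ≤ cost z) ∧
      ∀ w ∈ F, ¬ LocDominated T Cov cost w := by
    intro z hz
    by_cases hdom : LocDominated T Cov cost z
    · obtain ⟨S, hST, ⟨-, hcov, hcost⟩, hund⟩ := hrefine z hz hdom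
      exact ⟨S, hST, ⟨hcov, hcost⟩, hund⟩
    · exact ⟨{z}, singleton_subset_iff.mpr (hS₀ hz), by simp, by simpa using hdom⟩
  choose! F hFT hFdom hFund using hF
  have hsub : S₀.biUnion F ⊆ T := biUnion_subset.mpr hFT
  refine ⟨S₀.biUnion F, hsub, hx.biUnion ?_ (fun z hz => (hFdom z hz).1)
    (fun z hz => (hFdom z hz).2) (fun w hw => hnonneg w (hsub hw)), ?_⟩
  · intro hxF
    obtain ⟨z, hz, hxz⟩ := mem_biUnion.mp hxF
    exact hFund z hz x hxz ⟨S₀, hS₀, hx⟩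
  · intro w hw
    obtain ⟨z, hz, hwz⟩ := mem_biUnion.mp hw
    exact hFund z hz w hwz

theorem LocDominated.locDomByUndominated (hpos : ∀ w ∈ T, 0 < cost w)
    (hNoDup : ∀ x ∈ T, ∀ y ∈ T, Cov x = Cov y → cost x = cost y → x = y)
    {x : Inp} (hxT : x ∈ T) (hx : LocDominated T Cov cost x) :
    LocDomByUndominated T Cov cost x := by
  revert hx
  refine (wellFoundedOn_domRank T Cov cost).induction hxT
    (P := fun x => LocDominated T Cov cost x → LocDomByUndominated T Cov cost x)
    fun x hxT ih ⟨S₀, hS₀, hx₀⟩ => ?_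
  refine hx₀.locDomByUndominated hS₀ (fun w hw => (hpos w hw).le) fun z hz => ih z (hS₀ hz) ?_
  exact hx₀.domRank_lt hz (fun w hw => hpos w (hS₀ hw)) (hNoDup x hxT z (hS₀ hz))

end

theorem locDom_hierarchy_general {Inp Obj : Type*} [DecidableEq Inp] [DecidableEq Obj]
    (T : Finset Inp) (Cov : Inp → Finset Obj) (cost : Inp → ℝ)
    (hcost : ∀ i ∈ T, 0 < cost i)
    (hNoDup : ∀ i₁ ∈ T, ∀ i₂ ∈ T, Cov i₁ = Cov i₂ → cost i₁ = cost i₂ → i₁ = i₂)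
    (i : Inp)
    (hdom : ∃ S₀ : Finset Inp, S₀ ⊆ T ∧ LocDom Cov cost i S₀) :
    ∃ S : Finset Inp, S ⊆ T ∧ LocDom Cov cost i S ∧
      ∀ x ∈ S, ¬ ∃ S' : Finset Inp, S' ⊆ T ∧ LocDom Cov cost x S' := by
  obtain ⟨S₀, hS₀, hi₀⟩ := hdom
  exact hi₀.locDomByUndominated hS₀ (fun x hx => (hcost x hx).le) fun z hz =>
    LocDominated.locDomByUndominated hcost hNoDup (hS₀ hz)

/-- Local dominance hierarchy: every locally dominated input is locally dominated
by a subset of non-locally-dominated inputs. -/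
theorem locDom_hierarchy {Inp Obj : Type*} [DecidableEq Inp] [DecidableEq Obj]
    (T : Finset Inp) (Cov : Inp → Finset Obj) (cost : Inp → ℝ)
    (hCov : ∀ i ∈ T, (Cov i).Nonempty) (hcost : ∀ i ∈ T, 0 < cost i)
    (hNoDup : ∀ i₁ ∈ T, ∀ i₂ ∈ T, Cov i₁ = Cov i₂ → cost i₁ = cost i₂ → i₁ = i₂)
    (i : Inp) (hi : i ∈ T)
    (hdom : ∃ S₀ : Finset Inp, S₀ ⊆ T ∧ LocDom Cov cost i S₀) :
    ∃ S : Finset Inp, S ⊆ T ∧ LocDom Cov cost i S ∧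
      ∀ x ∈ S, ¬ ∃ S' : Finset Inp, S' ⊆ T ∧ LocDom Cov cost x S' :=
  locDom_hierarchy_general T Cov cost hcost hNoDup i hdom
end

section
/- Removal steps in disjoint regions do not affect redundancies: if C is a connected component of the overlap graph restricted to redundant inputs of I, in₀ ∈ C, and in₁, …, inₙ ∉ C, then red(in₀, I \ {in₁, …, inₙ}) = red(in₀, I). -/
/-- Redundancy of input `i` in input set `I`:
`min { |Seq(bl) ∩ I| : bl ∈ Cov i } − 1`, where `Seq(bl) = {x : bl ∈ Cov x}`. -/
noncomputable def red {Inp Obj : Type*} [DecidableEq Obj]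
    (Cov : Inp → Finset Obj) (i : Inp) (I : Finset Inp) : ℤ :=
  ((sInf {n : ℕ | ∃ bl ∈ Cov i, (I.filter fun x => bl ∈ Cov x).card = n} : ℕ) : ℤ) - 1

/-- A list is a valid order of removal steps for `I`. -/
noncomputable def RO {Inp Obj : Type*} [DecidableEq Inp] [DecidableEq Obj]
    (Cov : Inp → Finset Obj) : Finset Inp → List Inp → Prop
  | _, [] => True
  | I, i :: l => i ∈ I ∧ 0 < red Cov i I ∧ RO Cov (I.erase i) l

private lemma red_mono {Inp Obj : Type*} [DecidableEq Obj]
    (Cov : Inp → Finset Obj) (hCov : ∀ i : Inp, (Cov i).Nonempty)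
    {i : Inp} {I' I : Finset Inp} (h : I' ⊆ I) :
    red Cov i I' ≤ red Cov i I := by
  unfold red
  obtain ⟨bl0, hbl0⟩ := hCov i
  have hne : ({n : ℕ | ∃ bl ∈ Cov i, (I.filter fun x => bl ∈ Cov x).card = n}).Nonempty :=
    ⟨_, bl0, hbl0, rfl⟩
  obtain ⟨bl, hbl, heq⟩ := Nat.sInf_mem hne
  have h1 : sInf {n : ℕ | ∃ bl ∈ Cov i, (I'.filter fun x => bl ∈ Cov x).card = n}
      ≤ (I'.filter fun x => bl ∈ Cov x).card := Nat.sInf_le ⟨bl, hbl, rfl⟩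
  have h2 : (I'.filter fun x => bl ∈ Cov x).card ≤ (I.filter fun x => bl ∈ Cov x).card :=
    Finset.card_le_card (Finset.filter_subset_filter _ h)
  omega

private lemma red_erase {Inp Obj : Type*} [DecidableEq Inp] [DecidableEq Obj]
    (Cov : Inp → Finset Obj) {j i : Inp} (I : Finset Inp)
    (h : ∀ bl ∈ Cov j, bl ∉ Cov i) :
    red Cov j (I.erase i) = red Cov j I := by
  unfold red
  have hcard : ∀ bl ∈ Cov j,
      ((I.erase i).filter fun x => bl ∈ Cov x).card = (I.filter fun x => bl ∈ Cov x).card := by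
    intro bl hbl
    congr 1
    rw [Finset.filter_erase]
    exact Finset.erase_eq_of_notMem (by simp [h bl hbl])
  have hset : {n : ℕ | ∃ bl ∈ Cov j, ((I.erase i).filter fun x => bl ∈ Cov x).card = n}
      = {n : ℕ | ∃ bl ∈ Cov j, (I.filter fun x => bl ∈ Cov x).card = n} := by
    ext n
    constructor
    · rintro ⟨bl, hbl, hc⟩
      exact ⟨bl, hbl, by rw [← hcard bl hbl]; exact hc⟩
    · rintro ⟨bl, hbl, hc⟩
      exact ⟨bl, hbl, by rw [hcard bl hbl]; exact hc⟩
  rw [hset]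

/-- Independent redundancies: removal steps outside a connected component `C` of
the redundant inputs of `I` do not change redundancies inside `C`. -/
theorem independent_redundancies {Inp Obj : Type*} [DecidableEq Inp] [DecidableEq Obj]
    (Cov : Inp → Finset Obj) (hCov : ∀ i : Inp, (Cov i).Nonempty)
    (I C : Finset Inp) (hCI : C ⊆ I)
    (hCred : ∀ i ∈ C, 0 < red Cov i I)
    -- any redundant input of `I` overlapping a member of `C` belongs to `C`
    (hCcomp : ∀ i ∈ C, ∀ j ∈ I, 0 < red Cov j I → (Cov i ∩ Cov j).Nonempty → j ∈ C)
    (in₀ : Inp) (h₀ : in₀ ∈ C)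
    (l : List Inp) (hl : RO Cov I l) (hlC : ∀ x ∈ l, x ∉ C) :
    red Cov in₀ (I \ l.toFinset) = red Cov in₀ I := by
  induction l generalizing I with
  | nil => simp
  | cons i l ih =>
    obtain ⟨hiI, hired, hRO⟩ := hl
    have hiC : i ∉ C := hlC i (by simp)
    have hkey : ∀ j ∈ C, ∀ bl ∈ Cov j, bl ∉ Cov i := by
      intro j hj bl hblj hbli
      exact hiC (hCcomp j hj i hiI hired ⟨bl, Finset.mem_inter.mpr ⟨hblj, hbli⟩⟩)
    have hred_eq : ∀ j ∈ C, red Cov j (I.erase i) = red Cov j I :=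
      fun j hj => red_erase Cov I (hkey j hj)
    have hsub : C ⊆ I.erase i :=
      fun j hj => Finset.mem_erase.mpr ⟨fun h => hiC (h ▸ hj), hCI hj⟩
    have hmain := ih (I.erase i) hsub
      (fun j hj => (hred_eq j hj) ▸ hCred j hj)
      (fun j hj k hk hkred hov => hCcomp j hj k (Finset.mem_of_mem_erase hk)
        (lt_of_lt_of_le hkred (red_mono Cov hCov (Finset.erase_subset i I))) hov)
      hRO (fun x hx => hlC x (by simp [hx]))
    have hdiff : I \ (i :: l).toFinset = (I.erase i) \ l.toFinset := by
      ext x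
      simp only [List.toFinset_cons, Finset.mem_sdiff, Finset.mem_insert, Finset.mem_erase,
        List.mem_toFinset]
      tauto
    rw [hdiff, hmain, hred_eq in₀ h₀]
end

section
/- Redundancy computed within a connected component agrees with redundancy in the full set: if C is a connected component (under overlap) of the redundant inputs of I, in₀ ∈ C, and in₁, …, inₙ ∈ C, then red(in₀, C \ {in₁, …, inₙ}) = red(in₀, I \ {in₁, …, inₙ}). -/
/-- Redundancy within a connected component agrees with redundancy in the full set. -/
theorem red_within_component {Inp Obj : Type*} [DecidableEq Inp] [DecidableEq Obj]
    (Cov : Inp → Finset Obj) (hCov : ∀ i : Inp, (Cov i).Nonempty)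
    (I C : Finset Inp) (hCI : C ⊆ I)
    (hCred : ∀ i ∈ C, 0 < red Cov i I)
    -- closure of the component: any input of `I` sharing an objective with a
    -- member of `C` belongs to `C` (i.e. `Seq(bl) ∩ I ⊆ C` for `bl ∈ Cov in₀`, `in₀ ∈ C`)
    (hCcomp : ∀ i ∈ C, ∀ bl ∈ Cov i, ∀ j ∈ I, bl ∈ Cov j → j ∈ C)
    (in₀ : Inp) (h₀ : in₀ ∈ C)
    (l : List Inp) (hlC : ∀ x ∈ l, x ∈ C) :
    red Cov in₀ (C \ l.toFinset) = red Cov in₀ (I \ l.toFinset) := by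
  have key : ∀ bl ∈ Cov in₀,
      ((C \ l.toFinset).filter fun x => bl ∈ Cov x)
        = ((I \ l.toFinset).filter fun x => bl ∈ Cov x) := by
    intro bl hbl
    ext x
    simp only [Finset.mem_filter, Finset.mem_sdiff]
    constructor
    · rintro ⟨⟨hxC, hxl⟩, hx⟩
      exact ⟨⟨hCI hxC, hxl⟩, hx⟩
    · rintro ⟨⟨hxI, hxl⟩, hx⟩
      exact ⟨⟨hCcomp in₀ h₀ bl hbl x hxI hx, hxl⟩, hx⟩
  have hset : {n : ℕ | ∃ bl ∈ Cov in₀, ((C \ l.toFinset).filter fun x => bl ∈ Cov x).card = n}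
      = {n : ℕ | ∃ bl ∈ Cov in₀, ((I \ l.toFinset).filter fun x => bl ∈ Cov x).card = n} := by
    ext n
    constructor <;> rintro ⟨bl, hbl, h⟩ <;> exact ⟨bl, hbl, by rw [key bl hbl] at *; exact h⟩
  unfold red
  rw [hset]
end

section
/- Every valid order of removal steps within a connected component of the redundant inputs of I is a valid order of removal steps for I itself. -/
lemma red_eq_of_closed {Inp Obj : Type*} [DecidableEq Inp] [DecidableEq Obj]
    (Cov : Inp → Finset Obj) {I C : Finset Inp} (hCI : C ⊆ I)
    (hCcomp : ∀ i ∈ C, ∀ bl ∈ Cov i, ∀ j ∈ I, bl ∈ Cov j → j ∈ C)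
    {i : Inp} (hi : i ∈ C) : red Cov i C = red Cov i I := by
  unfold red
  congr 2
  apply congrArg
  ext n
  constructor <;> rintro ⟨bl, hbl, hcard⟩ <;> refine ⟨bl, hbl, ?_⟩ <;>
    rw [show I.filter (fun x => bl ∈ Cov x) = C.filter (fun x => bl ∈ Cov x) from ?_] at * <;>
    try exact hcard
  all_goals
    ext x
    simp only [Finset.mem_filter]
    exact ⟨fun ⟨hx, hb⟩ => ⟨hCcomp i hi bl hbl x hx hb, hb⟩,
      fun ⟨hx, hb⟩ => ⟨hCI hx, hb⟩⟩

lemma component_validity_aux {Inp Obj : Type*} [DecidableEq Inp] [DecidableEq Obj]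
    (Cov : Inp → Finset Obj) (l : List Inp) :
    ∀ C I : Finset Inp, C ⊆ I →
    (∀ i ∈ C, ∀ bl ∈ Cov i, ∀ j ∈ I, bl ∈ Cov j → j ∈ C) →
    RO Cov C l → RO Cov I l := by
  induction l with
  | nil => intro _ _ _ _ _; trivial
  | cons i l ih =>
    rintro C I hCI hcomp ⟨hiC, hred, hrest⟩
    refine ⟨hCI hiC, ?_, ?_⟩
    · rwa [← red_eq_of_closed Cov hCI hcomp hiC]
    · refine ih (C.erase i) (I.erase i) (Finset.erase_subset_erase i hCI) ?_ hrest
      intro a ha bl hbl j hj hb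
      exact Finset.mem_erase.mpr ⟨(Finset.mem_erase.mp hj).1,
        hcomp a (Finset.mem_of_mem_erase ha) bl hbl j (Finset.mem_of_mem_erase hj) hb⟩

/-- Component validity: a valid order of removal steps within a connected
component of the redundant inputs of `I` is valid for `I`. -/
theorem component_validity {Inp Obj : Type*} [DecidableEq Inp] [DecidableEq Obj]
    (Cov : Inp → Finset Obj) (hCov : ∀ i : Inp, (Cov i).Nonempty)
    (I C : Finset Inp) (hCI : C ⊆ I)
    (hCred : ∀ i ∈ C, 0 < red Cov i I)
    (hCcomp : ∀ i ∈ C, ∀ bl ∈ Cov i, ∀ j ∈ I, bl ∈ Cov j → j ∈ C)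
    (l : List Inp) (hl : RO Cov C l) : RO Cov I l := by
  exact component_validity_aux Cov l C I hCI hCcomp hl
end

section
/- Conversely, a valid order of removal steps for I whose elements all lie in a single connected component C of the redundant inputs of I is a valid order of removal steps for C. -/
/-! The redundancy of `i` in `I` depends on `I` only through the sets `Seq(bl) ∩ I` with
`bl ∈ Cov i`. For `i ∈ C` these lie inside `C`, so `red i C = red i I`; removing the same
input from `I` and from `C` preserves this closedness, so the removal steps can be replayed
in `C` one by one. -/

section

variable {Inp Obj : Type*} (Cov : Inp → Finset Obj)

def CovClosed (I C : Finset Inp) : Prop :=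
  ∀ i ∈ C, ∀ bl ∈ Cov i, ∀ j ∈ I, bl ∈ Cov j → j ∈ C

variable {Cov}

theorem CovClosed.erase [DecidableEq Inp] {I C : Finset Inp} (h : CovClosed Cov I C) (a : Inp) :
    CovClosed Cov (I.erase a) (C.erase a) := by
  intro i hi bl hbl j hj hjbl
  rw [Finset.mem_erase] at hi hj ⊢
  exact ⟨hj.1, h i hi.2 bl hbl j hj.2 hjbl⟩

theorem CovClosed.filter_eq [DecidableEq Obj] {I C : Finset Inp} (hCI : C ⊆ I)
    (h : CovClosed Cov I C) {i : Inp} (hi : i ∈ C) {bl : Obj} (hbl : bl ∈ Cov i) :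
    C.filter (fun x => bl ∈ Cov x) = I.filter (fun x => bl ∈ Cov x) :=
  (Finset.filter_subset_filter _ hCI).antisymm fun x hx => by
    rw [Finset.mem_filter] at hx ⊢
    exact ⟨h i hi bl hbl x hx.1 hx.2, hx.2⟩

theorem CovClosed.red_eq [DecidableEq Obj] {I C : Finset Inp} (hCI : C ⊆ I)
    (h : CovClosed Cov I C) {i : Inp} (hi : i ∈ C) : red Cov i C = red Cov i I := by
  unfold red
  congr 4
  ext n
  exact exists_congr fun bl => and_congr_right fun hbl => by rw [h.filter_eq hCI hi hbl]

theorem RO.mem [DecidableEq Inp] [DecidableEq Obj] {I : Finset Inp} :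
    ∀ {l : List Inp}, RO Cov I l → ∀ x ∈ l, x ∈ I
  | [], _, _, hx => absurd hx List.not_mem_nil
  | i :: l, ⟨hiI, _, hl⟩, x, hx => by
    rcases List.mem_cons.mp hx with rfl | hx
    · exact hiI
    · exact Finset.mem_of_mem_erase (hl.mem x hx)

end

theorem reduction_within_component_general {Inp Obj : Type*} [DecidableEq Inp] [DecidableEq Obj]
    (Cov : Inp → Finset Obj)
    (I C : Finset Inp) (hCI : C ⊆ I)
    (hCcomp : ∀ i ∈ C, ∀ bl ∈ Cov i, ∀ j ∈ I, bl ∈ Cov j → j ∈ C)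
    (l : List Inp) (hl : RO Cov I l) (hlC : ∀ x ∈ l, x ∈ C) : RO Cov C l := by
  induction l generalizing I C with
  | nil => trivial
  | cons i l ih =>
    obtain ⟨-, hred, hrest⟩ := hl
    have hiC : i ∈ C := hlC i List.mem_cons_self
    have hclosed : CovClosed Cov I C := hCcomp
    refine ⟨hiC, hclosed.red_eq hCI hiC ▸ hred, ?_⟩
    refine ih (I.erase i) (C.erase i) (Finset.erase_subset_erase i hCI) (hclosed.erase i) hrest ?_
    intro x hx
    exact Finset.mem_erase.mpr
      ⟨Finset.ne_of_mem_erase (hrest.mem x hx), hlC x (List.mem_cons_of_mem i hx)⟩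

/-- A valid order of removal steps for `I` whose elements all lie in a single
connected component `C` of the redundant inputs of `I` is valid for `C`. -/
theorem reduction_within_component {Inp Obj : Type*} [DecidableEq Inp] [DecidableEq Obj]
    (Cov : Inp → Finset Obj) (hCov : ∀ i : Inp, (Cov i).Nonempty)
    (I C : Finset Inp) (hCI : C ⊆ I)
    (hCred : ∀ i ∈ C, 0 < red Cov i I)
    (hCcomp : ∀ i ∈ C, ∀ bl ∈ Cov i, ∀ j ∈ I, bl ∈ Cov j → j ∈ C)
    (l : List Inp) (hl : RO Cov I l) (hlC : ∀ x ∈ l, x ∈ C) : RO Cov C l :=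
  reduction_within_component_general Cov I C hCI hCcomp l hl hlC
end
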